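/- arXiv:2512.11888 — 4 statements merged into one kernel-verified Lean document; each statement's English description precedes it below -/
import Mathlib

section
/- (Khintchine's inequality for functions.) Let 0 < p < ∞ and let (X, μ) be a measure space. There exist constants c(p), C(p) > 0 depending only on p such that for every m ≥ 1 and all f_1, …, f_m ∈ L^p(X, μ), if ε = (ε_1, …, ε_m) is uniformly distributed on {−1, +1}^m (equivalently, the ε_j are independent random signs taking values ±1 with probability 1/2 each), then c(p) ‖(∑_{j=1}^m |f_j|²)^{1/2}‖_{L^p(X,μ)} ≤ (𝔼 ‖∑_{j=1}^m ε_j f_j‖_{L^p(X,μ)}^p)^{1/p} ≤ C(p) ‖(∑_{j=1}^m |f_j|²)^{1/2}‖_{L^p(X,μ)}. -/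
open MeasureTheory Finset

namespace KhintchineAux

variable {m : ℕ}

noncomputable def sgn (ε : Fin m → Bool) (j : Fin m) : ℝ := if ε j then 1 else -1

lemma sgn_update_self (ε : Fin m → Bool) (j : Fin m) :
    sgn (Function.update ε j (!ε j)) j = - sgn ε j := by
  unfold sgn; simp [Function.update_self]; cases h : ε j <;> simp

lemma sgn_update_ne (ε : Fin m → Bool) {i j : Fin m} (h : i ≠ j) (b : Bool) :
    sgn (Function.update ε j b) i = sgn ε i := by
  unfold sgn; rw [Function.update_of_ne h]

/-- flip involution sum identity -/
lemma sum_flip (j : Fin m) (g : (Fin m → Bool) → ℝ) :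
    ∑ ε : Fin m → Bool, g ε = ∑ ε : Fin m → Bool, g (Function.update ε j (!ε j)) := by
  have hinv : Function.Involutive (fun ε : Fin m → Bool => Function.update ε j (!ε j)) := by
    intro ε
    funext i
    by_cases h : i = j
    · subst h; simp [Function.update_self]
    · simp [Function.update_of_ne h]
  exact (Fintype.sum_bijective _ hinv.bijective _ _ (fun ε => rfl)).symm

/-- If `h` does not depend on coordinate `j`, then `∑ ε, sgn ε j * h ε = 0`. -/
lemma sum_sgn_mul (j : Fin m) (h : (Fin m → Bool) → ℝ)
    (hh : ∀ ε b, h (Function.update ε j b) = h ε) :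
    ∑ ε : Fin m → Bool, sgn ε j * h ε = 0 := by
  have := sum_flip j (fun ε => sgn ε j * h ε)
  simp only [sgn_update_self, hh, neg_mul] at this
  rw [Finset.sum_neg_distrib] at this
  linarith


lemma sgn_sq (ε : Fin m → Bool) (j : Fin m) : sgn ε j ^ 2 = 1 := by
  unfold sgn; split <;> norm_num

lemma card_eps : (Fintype.card (Fin m → Bool) : ℝ) = 2 ^ m := by
  simp [Fintype.card_fun]

lemma sum_sgn_sgn (j k : Fin m) :
    ∑ ε : Fin m → Bool, sgn ε j * sgn ε k = if j = k then (2:ℝ) ^ m else 0 := by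
  by_cases h : j = k
  · subst h
    simp only [if_true, ← sq, sgn_sq]
    rw [Finset.sum_const, card_univ]
    simp [Fintype.card_fun]
  · rw [if_neg h]
    refine sum_sgn_mul j (fun ε => sgn ε k) ?_
    intro ε b
    show sgn (Function.update ε j b) k = sgn ε k
    unfold sgn
    rw [Function.update_of_ne (Ne.symm h)]

/-- Second moment identity. -/
lemma sum_sq_real (b : Fin m → ℝ) :
    ∑ ε : Fin m → Bool, (∑ j, sgn ε j * b j) ^ 2 = 2 ^ m * ∑ j, b j ^ 2 := by
  have expand : ∀ ε : Fin m → Bool, (∑ j, sgn ε j * b j) ^ 2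
      = ∑ j, ∑ k, (sgn ε j * sgn ε k) * (b j * b k) := by
    intro ε
    rw [sq, Finset.sum_mul_sum]
    refine Finset.sum_congr rfl fun j _ => Finset.sum_congr rfl fun k _ => by ring
  simp only [expand]
  rw [Finset.sum_comm]
  have : ∀ j : Fin m, ∑ ε : Fin m → Bool, ∑ k, (sgn ε j * sgn ε k) * (b j * b k)
      = (2:ℝ) ^ m * b j ^ 2 := by
    intro j
    rw [Finset.sum_comm]
    have : ∀ k : Fin m, ∑ ε : Fin m → Bool, (sgn ε j * sgn ε k) * (b j * b k)
        = (if j = k then (2:ℝ)^m else 0) * (b j * b k) := by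
      intro k
      rw [← Finset.sum_mul, sum_sgn_sgn]
    simp only [this]
    simp only [ite_mul, zero_mul, Finset.sum_ite_eq, mem_univ, if_true]
    ring
  simp only [this]
  rw [← Finset.mul_sum]


lemma sgn_pow_odd (ε : Fin m → Bool) (j : Fin m) {n : ℕ} (hn : Odd n) :
    sgn ε j ^ n = sgn ε j := by
  unfold sgn; split
  · simp
  · exact hn.neg_one_pow

lemma sgn_pow_even (ε : Fin m → Bool) (j : Fin m) {n : ℕ} (hn : Even n) :
    sgn ε j ^ n = 1 := by
  unfold sgn; split
  · simp
  · exact hn.neg_one_pow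

lemma sum_even_range (n : ℕ) (f : ℕ → ℝ) (hf : ∀ i, Odd i → f i = 0) :
    ∑ i ∈ range (2*n+1), f i = ∑ i ∈ range (n+1), f (2*i) := by
  induction n with
  | zero => simp
  | succ n ih =>
    have h1 : 2*(n+1)+1 = (2*n+1) + 1 + 1 := by ring
    rw [h1, Finset.sum_range_succ, Finset.sum_range_succ, ih,
      Finset.sum_range_succ (fun i => f (2*i)) (n+1), hf (2*n+1) ⟨n, by ring⟩]
    have h2 : 2*n+1+1 = 2*(n+1) := by ring
    rw [h2]
    ring

lemma nat_key {k i : ℕ} (hik : i ≤ k) :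
    (Nat.choose (2*k) (2*i)) * (Nat.factorial (2*(k-i))) ≤
      (Nat.factorial (2*k)) * (Nat.choose k i) := by
  have h1 : Nat.choose (2*k) (2*i) * Nat.factorial (2*i) * Nat.factorial (2*k - 2*i)
      = Nat.factorial (2*k) := Nat.choose_mul_factorial_mul_factorial (by omega)
  have h2 : 2*(k-i) = 2*k - 2*i := by omega
  have h3 : 1 ≤ Nat.factorial (2*i) := Nat.one_le_iff_ne_zero.mpr (Nat.factorial_ne_zero _)
  have h4 : 1 ≤ Nat.choose k i := Nat.choose_pos hik
  calc Nat.choose (2*k) (2*i) * Nat.factorial (2*(k-i))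
      ≤ Nat.choose (2*k) (2*i) * Nat.factorial (2*i) * Nat.factorial (2*(k-i)) :=
        Nat.mul_le_mul_right _ (Nat.le_mul_of_pos_right _ (by omega))
    _ = Nat.factorial (2*k) := by rw [h2] at *; nlinarith [h1]
    _ ≤ Nat.factorial (2*k) * Nat.choose k i := Nat.le_mul_of_pos_right _ (by omega)

lemma moment (t : Finset (Fin m)) : ∀ (k : ℕ) (b : Fin m → ℝ),
    ∑ ε : Fin m → Bool, (∑ j ∈ t, sgn ε j * b j) ^ (2*k)
      ≤ 2^m * (Nat.factorial (2*k)) * (∑ j ∈ t, b j^2)^k := by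
  induction t using Finset.induction_on with
  | empty =>
    intro k b
    simp only [Finset.sum_empty]
    cases k with
    | zero => simp [card_univ, Fintype.card_fun]
    | succ k =>
      rw [zero_pow (by omega)]
      simp only [Finset.sum_const, smul_zero]
      positivity
  | @insert j t hj ih =>
    intro k b
    simp only [Finset.sum_insert hj]
    set T : (Fin m → Bool) → ℝ := fun ε => ∑ i ∈ t, sgn ε i * b i with hT
    set Q : ℝ := ∑ i ∈ t, b i ^ 2 with hQ
    have hQ0 : (0:ℝ) ≤ Q := by rw [hQ]; exact Finset.sum_nonneg fun i _ => sq_nonneg _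
    have hTupd : ∀ (ε : Fin m → Bool) (c : Bool), T (Function.update ε j c) = T ε := by
      intro ε c
      rw [hT]
      refine Finset.sum_congr rfl fun i hi => ?_
      rw [sgn_update_ne _ (fun h : i = j => hj (h ▸ hi)) c]
    have expand1 : ∀ ε : Fin m → Bool, (sgn ε j * b j + T ε) ^ (2*k)
        = ∑ i ∈ range (2*k+1), sgn ε j ^ i *
            (b j ^ i * (T ε ^ (2*k - i) * ((2*k).choose i : ℝ))) := by
      intro ε
      rw [add_pow]
      exact Finset.sum_congr rfl fun i _ => by rw [mul_pow]; ring
    have swap : ∑ ε : Fin m → Bool, (sgn ε j * b j + T ε) ^ (2*k)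
        = ∑ i ∈ range (2*k+1), ∑ ε : Fin m → Bool,
            sgn ε j ^ i * (b j ^ i * (T ε ^ (2*k - i) * ((2*k).choose i : ℝ))) := by
      simp only [expand1]
      exact Finset.sum_comm
    rw [swap]
    set g : ℕ → ℝ := fun i => ∑ ε : Fin m → Bool,
        sgn ε j ^ i * (b j ^ i * (T ε ^ (2*k - i) * ((2*k).choose i : ℝ))) with hg
    have hodd : ∀ i, Odd i → g i = 0 := by
      intro i hi
      simp only [hg]
      have : ∀ ε : Fin m → Bool, sgn ε j ^ i * (b j ^ i * (T ε ^ (2*k - i) * ((2*k).choose i : ℝ)))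
          = sgn ε j * (b j ^ i * (T ε ^ (2*k - i) * ((2*k).choose i : ℝ))) := by
        intro ε; rw [sgn_pow_odd ε j hi]
      rw [Finset.sum_congr rfl fun ε _ => this ε]
      exact sum_sgn_mul j _ (fun ε c => by rw [hTupd])
    rw [sum_even_range k g hodd]
    have perterm : ∀ i, i ≤ k → g (2*i)
        ≤ 2^m * (((2*k).factorial : ℝ) * (k.choose i : ℝ)) * ((b j ^ 2) ^ i * Q ^ (k - i)) := by
      intro i hik
      have h2i : 2*k - 2*i = 2*(k-i) := by omega
      have ihh : ∑ ε : Fin m → Bool, T ε ^ (2*(k-i))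
          ≤ 2^m * ((2*(k-i)).factorial : ℝ) * Q^(k-i) := ih (k-i) b
      have hkey : ((2*k).choose (2*i) : ℝ) * ((2*(k-i)).factorial : ℝ)
          ≤ ((2*k).factorial : ℝ) * (k.choose i : ℝ) := by exact_mod_cast nat_key hik
      have hsum0 : (0:ℝ) ≤ ∑ ε : Fin m → Bool, T ε ^ (2*(k-i)) :=
        Finset.sum_nonneg fun ε _ => (even_two_mul (k-i)).pow_nonneg _
      calc g (2*i) = ∑ ε : Fin m → Bool, ((b j ^2)^i * ((2*k).choose (2*i) : ℝ)) * T ε ^ (2*(k-i)) := by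
            simp only [hg]
            refine Finset.sum_congr rfl fun ε _ => ?_
            rw [sgn_pow_even ε j ⟨i, two_mul i⟩, one_mul, h2i, pow_mul]
            ring
        _ = ((b j ^2)^i * ((2*k).choose (2*i) : ℝ)) * ∑ ε : Fin m → Bool, T ε ^ (2*(k-i)) := by
            rw [Finset.mul_sum]
        _ ≤ ((b j ^2)^i * ((2*k).choose (2*i) : ℝ)) * (2^m * ((2*(k-i)).factorial : ℝ) * Q^(k-i)) := by
            apply mul_le_mul_of_nonneg_left ihh (by positivity)
        _ = (2:ℝ)^m * ((b j ^2)^i * Q^(k-i)) * (((2*k).choose (2*i) : ℝ) * ((2*(k-i)).factorial : ℝ)) := by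
            ring
        _ ≤ (2:ℝ)^m * ((b j ^2)^i * Q^(k-i)) * (((2*k).factorial : ℝ) * (k.choose i : ℝ)) := by
            apply mul_le_mul_of_nonneg_left hkey (by positivity)
        _ = 2^m * (((2*k).factorial : ℝ) * (k.choose i : ℝ)) * ((b j ^ 2) ^ i * Q ^ (k - i)) := by
            ring
    calc ∑ i ∈ range (k+1), g (2*i)
        ≤ ∑ i ∈ range (k+1), 2^m * (((2*k).factorial : ℝ) * (k.choose i : ℝ)) * ((b j ^ 2) ^ i * Q ^ (k - i)) :=
          Finset.sum_le_sum fun i hi => perterm i (Nat.lt_succ_iff.mp (mem_range.mp hi))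
      _ = 2^m * ((2*k).factorial : ℝ) * (b j ^ 2 + Q)^k := by
          rw [add_pow, Finset.mul_sum]
          exact Finset.sum_congr rfl fun i _ => by ring

noncomputable def S (a : Fin m → ℂ) (ε : Fin m → Bool) : ℂ :=
  ∑ j, (if ε j then (1:ℂ) else -1) * a j

lemma S_re (a : Fin m → ℂ) (ε : Fin m → Bool) :
    (S a ε).re = ∑ j, sgn ε j * (a j).re := by
  unfold S sgn
  rw [Complex.re_sum]
  refine Finset.sum_congr rfl fun j _ => ?_
  cases h : ε j <;> simp

lemma S_im (a : Fin m → ℂ) (ε : Fin m → Bool) :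
    (S a ε).im = ∑ j, sgn ε j * (a j).im := by
  unfold S sgn
  rw [Complex.im_sum]
  refine Finset.sum_congr rfl fun j _ => ?_
  cases h : ε j <;> simp

lemma norm_sq_complex (z : ℂ) : ‖z‖ ^ 2 = z.re ^ 2 + z.im ^ 2 := by
  rw [Complex.sq_norm, Complex.normSq_apply]; ring

lemma sum_normsq (a : Fin m → ℂ) :
    ∑ ε : Fin m → Bool, ‖S a ε‖ ^ 2 = 2 ^ m * ∑ j, ‖a j‖ ^ 2 := by
  have : ∀ ε : Fin m → Bool, ‖S a ε‖ ^ 2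
      = (∑ j, sgn ε j * (a j).re) ^ 2 + (∑ j, sgn ε j * (a j).im) ^ 2 := by
    intro ε; rw [norm_sq_complex, S_re, S_im]
  simp only [this]
  rw [Finset.sum_add_distrib, sum_sq_real, sum_sq_real, ← mul_add, ← Finset.sum_add_distrib]
  congr 1
  exact Finset.sum_congr rfl fun j _ => (norm_sq_complex (a j)).symm

lemma moment_complex (a : Fin m → ℂ) (k : ℕ) :
    ∑ ε : Fin m → Bool, ‖S a ε‖ ^ (2*k)
      ≤ 2^m * (2^(k+1) * Nat.factorial (2*k)) * (∑ j, ‖a j‖ ^ 2)^k := by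
  set QA : ℝ := ∑ j, (a j).re ^ 2 with hQA
  set QB : ℝ := ∑ j, (a j).im ^ 2 with hQB
  have hQ : ∑ j, ‖a j‖ ^ 2 = QA + QB := by
    rw [hQA, hQB, ← Finset.sum_add_distrib]
    exact Finset.sum_congr rfl fun j _ => norm_sq_complex (a j)
  have hQA0 : 0 ≤ QA := Finset.sum_nonneg fun j _ => sq_nonneg _
  have hQB0 : 0 ≤ QB := Finset.sum_nonneg fun j _ => sq_nonneg _
  have hpt : ∀ ε : Fin m → Bool, ‖S a ε‖ ^ (2*k)
      ≤ 2^k * ((∑ j, sgn ε j * (a j).re) ^ (2*k) + (∑ j, sgn ε j * (a j).im) ^ (2*k)) := by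
    intro ε
    have h1 : ‖S a ε‖ ^ (2*k) = ((∑ j, sgn ε j * (a j).re) ^ 2 + (∑ j, sgn ε j * (a j).im) ^ 2) ^ k := by
      rw [pow_mul, norm_sq_complex, S_re, S_im]
    rw [h1]
    calc ((∑ j, sgn ε j * (a j).re) ^ 2 + (∑ j, sgn ε j * (a j).im) ^ 2) ^ k
        ≤ 2^(k-1) * (((∑ j, sgn ε j * (a j).re) ^ 2)^k + ((∑ j, sgn ε j * (a j).im) ^ 2)^k) :=
          add_pow_le (sq_nonneg _) (sq_nonneg _) k
      _ ≤ 2^k * (((∑ j, sgn ε j * (a j).re) ^ 2)^k + ((∑ j, sgn ε j * (a j).im) ^ 2)^k) := by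
          apply mul_le_mul_of_nonneg_right (pow_le_pow_right₀ (by norm_num) (Nat.sub_le k 1))
          positivity
      _ = 2^k * ((∑ j, sgn ε j * (a j).re) ^ (2*k) + (∑ j, sgn ε j * (a j).im) ^ (2*k)) := by
          rw [← pow_mul, ← pow_mul, mul_comm 2 k]
  calc ∑ ε : Fin m → Bool, ‖S a ε‖ ^ (2*k)
      ≤ ∑ ε : Fin m → Bool, 2^k * ((∑ j, sgn ε j * (a j).re) ^ (2*k) + (∑ j, sgn ε j * (a j).im) ^ (2*k)) :=
        Finset.sum_le_sum fun ε _ => hpt ε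
    _ = 2^k * ((∑ ε : Fin m → Bool, (∑ j, sgn ε j * (a j).re) ^ (2*k))
          + ∑ ε : Fin m → Bool, (∑ j, sgn ε j * (a j).im) ^ (2*k)) := by
        rw [← Finset.mul_sum, Finset.sum_add_distrib]
    _ ≤ 2^k * ((2^m * Nat.factorial (2*k) * QA^k) + (2^m * Nat.factorial (2*k) * QB^k)) := by
        apply mul_le_mul_of_nonneg_left _ (by positivity)
        gcongr
        · simpa using moment univ k (fun j => (a j).re)
        · simpa using moment univ k (fun j => (a j).im)
    _ ≤ 2^k * ((2^m * Nat.factorial (2*k) * (QA+QB)^k) + (2^m * Nat.factorial (2*k) * (QA+QB)^k)) := by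
        gcongr <;> [exact le_add_of_nonneg_right hQB0; exact le_add_of_nonneg_left hQA0]
    _ = 2^m * (2^(k+1) * Nat.factorial (2*k)) * (∑ j, ‖a j‖ ^ 2)^k := by
        rw [hQ]; ring


lemma wsum : ∑ _ε : Fin m → Bool, ((2:ℝ)^m)⁻¹ = 1 := by
  rw [Finset.sum_const, card_univ]
  simp [Fintype.card_fun]

lemma two_pow_m_pos : (0:ℝ) < 2^m := by positivity

/-- Jensen: the `L^s`-average dominates the average, for `1 ≤ t`, in the form we need. -/
lemma jensen_avg (z : (Fin m → Bool) → ℝ) (hz : ∀ ε, 0 ≤ z ε) {t : ℝ} (ht : 1 ≤ t) :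
    ((2:ℝ)^m)⁻¹ * ∑ ε : Fin m → Bool, z ε
      ≤ (((2:ℝ)^m)⁻¹ * ∑ ε : Fin m → Bool, (z ε) ^ t) ^ (1/t) := by
  have h := Real.arith_mean_le_rpow_mean univ (fun _ => ((2:ℝ)^m)⁻¹) z
      (fun ε _ => by positivity) wsum (fun ε _ => hz ε) ht
  rw [← Finset.mul_sum, ← Finset.mul_sum] at h
  exact h

lemma scalar_upper (p : ℝ) (hp : 0 < p) (k : ℕ) (hk1 : 1 ≤ k) (hk2 : p ≤ 2*k) (a : Fin m → ℂ) :
    ((2:ℝ)^m)⁻¹ * ∑ ε : Fin m → Bool, ‖S a ε‖ ^ p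
      ≤ (2^(k+1) * Nat.factorial (2*k)) * (∑ j, ‖a j‖^2) ^ (p/2) := by
  set Q : ℝ := ∑ j, ‖a j‖^2 with hQdef
  have hQ0 : 0 ≤ Q := Finset.sum_nonneg fun j _ => sq_nonneg _
  set M : ℝ := 2^(k+1) * Nat.factorial (2*k) with hM
  have hM1 : (1:ℝ) ≤ M := by
    rw [hM]
    have h1 : (1:ℝ) ≤ 2^(k+1) := one_le_pow₀ (by norm_num)
    have h2 : (1:ℝ) ≤ Nat.factorial (2*k) := by
      exact_mod_cast Nat.one_le_iff_ne_zero.mpr (Nat.factorial_ne_zero _)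
    nlinarith
  set t : ℝ := (2*k) / p with ht
  have ht1 : 1 ≤ t := (one_le_div hp).mpr hk2
  have ht0 : 0 < t := lt_of_lt_of_le one_pos ht1
  have hkR : (0:ℝ) < (k:ℝ) := by exact_mod_cast hk1
  have hzt : ∀ ε : Fin m → Bool, (‖S a ε‖ ^ p) ^ t = ‖S a ε‖ ^ (2*k) := by
    intro ε
    rw [← Real.rpow_natCast (‖S a ε‖) (2*k), ← Real.rpow_mul (norm_nonneg _)]
    congr 1
    rw [ht]
    push_cast
    field_simp
  have step1 : ((2:ℝ)^m)⁻¹ * ∑ ε : Fin m → Bool, ‖S a ε‖ ^ p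
      ≤ (((2:ℝ)^m)⁻¹ * ∑ ε : Fin m → Bool, ‖S a ε‖ ^ (2*k)) ^ (1/t) := by
    have h := jensen_avg (fun ε => ‖S a ε‖ ^ p)
        (fun ε => Real.rpow_nonneg (norm_nonneg _) _) ht1
    simp only [hzt] at h
    exact h
  have step2 : ((2:ℝ)^m)⁻¹ * ∑ ε : Fin m → Bool, ‖S a ε‖ ^ (2*k) ≤ M * Q^k := by
    have h := moment_complex a k
    calc ((2:ℝ)^m)⁻¹ * ∑ ε : Fin m → Bool, ‖S a ε‖ ^ (2*k)
        ≤ ((2:ℝ)^m)⁻¹ * (2^m * M * Q^k) := by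
          apply mul_le_mul_of_nonneg_left _ (by positivity)
          calc ∑ ε : Fin m → Bool, ‖S a ε‖ ^ (2*k)
              ≤ 2^m * (2^(k+1) * Nat.factorial (2*k)) * Q^k := h
            _ = 2^m * M * Q^k := by rw [hM]
      _ = M * Q^k := by field_simp
  have hbase0 : 0 ≤ ((2:ℝ)^m)⁻¹ * ∑ ε : Fin m → Bool, ‖S a ε‖ ^ (2*k) := by
    apply mul_nonneg (by positivity)
    exact Finset.sum_nonneg fun ε _ => (even_two_mul k).pow_nonneg _
  calc ((2:ℝ)^m)⁻¹ * ∑ ε : Fin m → Bool, ‖S a ε‖ ^ p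
      ≤ (((2:ℝ)^m)⁻¹ * ∑ ε : Fin m → Bool, ‖S a ε‖ ^ (2*k)) ^ (1/t) := step1
    _ ≤ (M * Q^k) ^ (1/t) := Real.rpow_le_rpow hbase0 step2 (by positivity)
    _ = M ^ (1/t) * (Q^k) ^ (1/t) := Real.mul_rpow (by linarith) (by positivity)
    _ = M ^ (1/t) * Q ^ (p/2) := by
        have hkne : (k:ℝ) ≠ 0 := ne_of_gt hkR
        have hexp : (k:ℝ) * (1/t) = p/2 := by
          rw [ht]; field_simp
        rw [← Real.rpow_natCast Q k, ← Real.rpow_mul hQ0, hexp]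
    _ ≤ M * Q ^ (p/2) := by
        apply mul_le_mul_of_nonneg_right _ (Real.rpow_nonneg hQ0 _)
        calc M ^ (1/t) ≤ M ^ (1:ℝ) :=
              Real.rpow_le_rpow_of_exponent_le hM1 (by rw [div_le_one ht0]; exact ht1)
          _ = M := Real.rpow_one M

lemma scalar_lower (p : ℝ) (hp : 0 < p) (a : Fin m → ℂ) :
    (192:ℝ)⁻¹ * (∑ j, ‖a j‖^2) ^ (p/2)
      ≤ ((2:ℝ)^m)⁻¹ * ∑ ε : Fin m → Bool, ‖S a ε‖ ^ p := by
  set Q : ℝ := ∑ j, ‖a j‖^2 with hQdef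
  have hQ0 : 0 ≤ Q := Finset.sum_nonneg fun j _ => sq_nonneg _
  set E : ℝ := ((2:ℝ)^m)⁻¹ * ∑ ε : Fin m → Bool, ‖S a ε‖ ^ p with hE
  have hE0 : 0 ≤ E := by
    apply mul_nonneg (by positivity)
    exact Finset.sum_nonneg fun ε _ => Real.rpow_nonneg (norm_nonneg _) _
  have hE2 : ((2:ℝ)^m)⁻¹ * ∑ ε : Fin m → Bool, ‖S a ε‖ ^ 2 = Q := by
    rw [sum_normsq, ← hQdef, ← mul_assoc, inv_mul_cancel₀ (ne_of_gt two_pow_m_pos), one_mul]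
  by_cases hp2 : 2 ≤ p
  · -- p ≥ 2 : Jensen
    have ht1 : (1:ℝ) ≤ p/2 := by linarith
    have h := jensen_avg (fun ε => ‖S a ε‖ ^ (2:ℕ)) (fun ε => sq_nonneg _) ht1
    have hconv : ∀ ε : Fin m → Bool, ((‖S a ε‖ ^ (2:ℕ)) : ℝ) ^ (p/2 : ℝ) = ‖S a ε‖ ^ p := by
      intro ε
      rw [← Real.rpow_natCast (‖S a ε‖) 2, ← Real.rpow_mul (norm_nonneg _)]
      norm_num
      rw [mul_div_cancel₀]
      norm_num
    simp only [hconv] at h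
    rw [hE2] at h
    -- h : Q ≤ E ^ (1/(p/2))
    have hQp : Q ^ (p/2) ≤ E := by
      calc Q ^ (p/2) ≤ (E ^ (1/(p/2))) ^ (p/2) :=
            Real.rpow_le_rpow hQ0 h (by positivity)
        _ = E := by
            rw [← Real.rpow_mul hE0]
            rw [one_div, inv_mul_cancel₀ (by positivity)]
            exact Real.rpow_one E
    calc (192:ℝ)⁻¹ * Q ^ (p/2) ≤ 1 * Q ^ (p/2) := by
          apply mul_le_mul_of_nonneg_right (by norm_num) (Real.rpow_nonneg hQ0 _)
      _ = Q ^ (p/2) := one_mul _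
      _ ≤ E := hQp
  · push_neg at hp2
    by_cases hQz : Q = 0
    · rw [hQz, Real.zero_rpow (by positivity)]
      simpa using hE0
    have hQpos : 0 < Q := lt_of_le_of_ne hQ0 (Ne.symm hQz)
    -- Cauchy-Schwarz
    set u : (Fin m → Bool) → ℝ := fun ε => ‖S a ε‖ ^ (p/2) with hu
    set v : (Fin m → Bool) → ℝ := fun ε => ‖S a ε‖ ^ ((4-p)/2) with hv
    have huv : ∀ ε, u ε * v ε = ‖S a ε‖ ^ (2:ℕ) := by
      intro ε
      rw [hu, hv]
      simp only
      rw [← Real.rpow_add' (norm_nonneg _) (by intro hc; linarith)]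
      rw [show p/2 + (4-p)/2 = ((2:ℕ):ℝ) by push_cast; ring, Real.rpow_natCast]
    have hu2 : ∀ ε, u ε ^ 2 = ‖S a ε‖ ^ p := by
      intro ε
      rw [hu, sq]
      simp only
      rw [← Real.rpow_add' (norm_nonneg _) (by linarith)]
      norm_num
    have hv2 : ∀ ε, v ε ^ 2 = ‖S a ε‖ ^ ((4-p) : ℝ) := by
      intro ε
      rw [hv, sq]
      simp only
      rw [← Real.rpow_add' (norm_nonneg _) (by intro hc; linarith)]
      norm_num
    have cs := Finset.sum_mul_sq_le_sq_mul_sq univ u v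
    set V : ℝ := ((2:ℝ)^m)⁻¹ * ∑ ε : Fin m → Bool, ‖S a ε‖ ^ ((4-p):ℝ) with hV
    have hV0 : 0 ≤ V := by
      apply mul_nonneg (by positivity)
      exact Finset.sum_nonneg fun ε _ => Real.rpow_nonneg (norm_nonneg _) _
    have hQ2EV : Q^2 ≤ E * V := by
      have h1 : Q = ((2:ℝ)^m)⁻¹ * ∑ ε : Fin m → Bool, u ε * v ε := by
        rw [← hE2]
        congr 1
        exact Finset.sum_congr rfl fun ε _ => (huv ε).symm
      have h2 : Q^2 = (((2:ℝ)^m)⁻¹)^2 * (∑ ε : Fin m → Bool, u ε * v ε)^2 := by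
        rw [h1]; ring
      calc Q^2 = (((2:ℝ)^m)⁻¹)^2 * (∑ ε : Fin m → Bool, u ε * v ε)^2 := h2
        _ ≤ (((2:ℝ)^m)⁻¹)^2 * ((∑ ε : Fin m → Bool, u ε ^2) * (∑ ε : Fin m → Bool, v ε ^2)) := by
            apply mul_le_mul_of_nonneg_left cs (by positivity)
        _ = (((2:ℝ)^m)⁻¹ * ∑ ε : Fin m → Bool, u ε ^2) * (((2:ℝ)^m)⁻¹ * ∑ ε : Fin m → Bool, v ε ^2) := by
            ring
        _ = E * V := by
            rw [hE, hV]
            congr 2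
            · exact Finset.sum_congr rfl fun ε _ => hu2 ε
            · exact Finset.sum_congr rfl fun ε _ => hv2 ε
    -- Bound V via fourth moment
    have hE4 : ((2:ℝ)^m)⁻¹ * ∑ ε : Fin m → Bool, ‖S a ε‖ ^ (2*2 : ℕ) ≤ 192 * Q^2 := by
      have h := moment_complex a 2
      calc ((2:ℝ)^m)⁻¹ * ∑ ε : Fin m → Bool, ‖S a ε‖ ^ (2*2 : ℕ)
          ≤ ((2:ℝ)^m)⁻¹ * (2^m * (2^(2+1) * Nat.factorial (2*2)) * Q^2) := by
            apply mul_le_mul_of_nonneg_left h (by positivity)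
        _ = 192 * Q^2 := by
            rw [show ((2:ℝ)^(2+1) * Nat.factorial (2*2)) = 192 by norm_num [Nat.factorial]]
            field_simp
    have hVbound : V ≤ (192 * Q^2) ^ ((4-p)/4) := by
      have ht1 : (1:ℝ) ≤ 4/(4-p) := by
        rw [le_div_iff₀ (by linarith)]
        linarith
      have h := jensen_avg (fun ε => ‖S a ε‖ ^ ((4-p):ℝ))
          (fun ε => Real.rpow_nonneg (norm_nonneg _) _) ht1
      have hconv : ∀ ε : Fin m → Bool, (‖S a ε‖ ^ ((4-p):ℝ)) ^ ((4:ℝ)/(4-p)) = ‖S a ε‖ ^ (2*2 : ℕ) := by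
        intro ε
        rw [← Real.rpow_natCast (‖S a ε‖) (2*2), ← Real.rpow_mul (norm_nonneg _)]
        congr 1
        push_cast
        have hne : (4:ℝ) - p ≠ 0 := by intro hc; linarith
        field_simp
      simp only [hconv] at h
      calc V ≤ (((2:ℝ)^m)⁻¹ * ∑ ε : Fin m → Bool, ‖S a ε‖ ^ (2*2 : ℕ)) ^ (1/(4/(4-p))) := h
        _ ≤ (192 * Q^2) ^ (1/(4/(4-p))) := by
            apply Real.rpow_le_rpow _ hE4 (by positivity)
            apply mul_nonneg (by positivity)
            exact Finset.sum_nonneg fun ε _ => (even_two_mul 2).pow_nonneg _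
        _ = (192 * Q^2) ^ ((4-p)/4) := by
            congr 1
            rw [one_div_div]
    -- assemble
    have hB : (192 * Q^2) ^ ((4-p)/4) = (192:ℝ)^((4-p)/4) * Q ^ (((4-p)/2):ℝ) := by
      rw [Real.mul_rpow (by norm_num) (by positivity)]
      congr 1
      rw [← Real.rpow_natCast Q 2, ← Real.rpow_mul hQ0]
      norm_num
      ring_nf
    have hBpos : 0 < (192:ℝ)^((4-p)/4 : ℝ) * Q ^ (((4-p)/2):ℝ) := by
      apply mul_pos (Real.rpow_pos_of_pos (by norm_num) _) (Real.rpow_pos_of_pos hQpos _)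
    have hQ2 : Q^2 ≤ E * ((192:ℝ)^((4-p)/4) * Q ^ (((4-p)/2):ℝ)) := by
      calc Q^2 ≤ E * V := hQ2EV
        _ ≤ E * (192 * Q^2) ^ ((4-p)/4) := by
            apply mul_le_mul_of_nonneg_left hVbound hE0
        _ = E * ((192:ℝ)^((4-p)/4) * Q ^ (((4-p)/2):ℝ)) := by rw [hB]
    -- now conclude: 192⁻¹ * Q^(p/2) ≤ E
    rw [← sub_nonneg]
    have key : (192:ℝ)⁻¹ * Q ^ (p/2) * ((192:ℝ)^((4-p)/4) * Q ^ (((4-p)/2):ℝ)) ≤ Q^2 := by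
      have e1 : Q ^ (p/2 : ℝ) * Q ^ (((4-p)/2):ℝ) = Q^2 := by
        rw [← Real.rpow_add hQpos]
        rw [show p/2 + (4-p)/2 = ((2:ℕ):ℝ) by push_cast; ring, Real.rpow_natCast]
      have e2 : (192:ℝ)⁻¹ * (192:ℝ)^((4-p)/4) ≤ 1 := by
        rw [← Real.rpow_neg_one (192:ℝ), ← Real.rpow_add (by norm_num)]
        calc (192:ℝ) ^ (-1 + (4-p)/4) ≤ (192:ℝ) ^ (0:ℝ) := by
              apply Real.rpow_le_rpow_of_exponent_le (by norm_num)
              linarith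
          _ = 1 := Real.rpow_zero _
      calc (192:ℝ)⁻¹ * Q ^ (p/2) * ((192:ℝ)^((4-p)/4) * Q ^ (((4-p)/2):ℝ))
          = ((192:ℝ)⁻¹ * (192:ℝ)^((4-p)/4)) * (Q ^ (p/2 : ℝ) * Q ^ (((4-p)/2):ℝ)) := by ring
        _ ≤ 1 * (Q ^ (p/2 : ℝ) * Q ^ (((4-p)/2):ℝ)) := by
            apply mul_le_mul_of_nonneg_right e2
            positivity
        _ = Q^2 := by rw [one_mul, e1]
    have := le_trans key hQ2
    have hfin : (192:ℝ)⁻¹ * Q ^ (p/2) ≤ E := by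
      have h2 := (mul_le_mul_iff_left₀ hBpos).mp (le_trans key hQ2)
      exact h2
    linarith


end KhintchineAux

open KhintchineAux in
/-- **Khintchine's inequality for functions.** For `0 < p < ∞` there are constants
`c(p), C(p) > 0` such that for all `m ≥ 1` and all `f_1, …, f_m ∈ L^p(X, μ)`, averaging over
all `2^m` sign patterns `ε ∈ {−1,+1}^m`,
`c(p) ‖(∑ |f_j|²)^{1/2}‖_p ≤ (𝔼 ‖∑ ε_j f_j‖_p^p)^{1/p} ≤ C(p) ‖(∑ |f_j|²)^{1/2}‖_p`. -/
theorem khintchine_inequality {X : Type*} [MeasurableSpace X] (μ : Measure X)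
    (p : ℝ) (hp : 0 < p) :
    ∃ c C : ℝ, 0 < c ∧ 0 < C ∧
      ∀ (m : ℕ), 1 ≤ m → ∀ f : Fin m → X → ℂ,
        (∀ j, MemLp (f j) (ENNReal.ofReal p) μ) →
        c * (∫ x, (∑ j, ‖f j x‖ ^ 2) ^ (p / 2) ∂μ) ^ (1 / p) ≤
          (((2 : ℝ) ^ m)⁻¹ *
            ∑ ε : Fin m → Bool,
              ∫ x, ‖∑ j, (if ε j then (1 : ℂ) else -1) * f j x‖ ^ p ∂μ) ^ (1 / p) ∧
        (((2 : ℝ) ^ m)⁻¹ *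
            ∑ ε : Fin m → Bool,
              ∫ x, ‖∑ j, (if ε j then (1 : ℂ) else -1) * f j x‖ ^ p ∂μ) ^ (1 / p) ≤
          C * (∫ x, (∑ j, ‖f j x‖ ^ 2) ^ (p / 2) ∂μ) ^ (1 / p) := by
  -- choose the even moment index
  set k : ℕ := max 1 ⌈p/2⌉₊ with hk
  have hk1 : 1 ≤ k := le_max_left _ _
  have hk2 : p ≤ 2*k := by
    have h1 : p/2 ≤ (⌈p/2⌉₊ : ℝ) := Nat.le_ceil _
    have h2 : (⌈p/2⌉₊ : ℝ) ≤ (k : ℝ) := by exact_mod_cast le_max_right 1 ⌈p/2⌉₊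
    linarith
  set M : ℝ := 2^(k+1) * Nat.factorial (2*k) with hM
  have hMpos : 0 < M := by
    rw [hM]
    have : (0:ℝ) < Nat.factorial (2*k) := by
      exact_mod_cast Nat.factorial_pos _
    positivity
  refine ⟨((192:ℝ)⁻¹) ^ (1/p), M ^ (1/p),
    Real.rpow_pos_of_pos (by norm_num) _, Real.rpow_pos_of_pos hMpos _, ?_⟩
  intro m hm f hf
  -- setup
  set F : (Fin m → Bool) → X → ℂ := fun ε x => ∑ j, (if ε j then (1:ℂ) else -1) * f j x with hF
  set h : X → ℝ := fun x => (∑ j, ‖f j x‖ ^ 2) ^ (p / 2) with hh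
  have hFmem : ∀ ε, MemLp (F ε) (ENNReal.ofReal p) μ := by
    intro ε
    rw [hF]
    exact memLp_finset_sum univ (fun j _ => (hf j).const_mul _)
  have hpne : ENNReal.ofReal p ≠ 0 := by
    simp [ENNReal.ofReal_eq_zero, not_le, hp]
  have hgint : ∀ ε, Integrable (fun x => ‖F ε x‖ ^ p) μ := by
    intro ε
    have := (hFmem ε).integrable_norm_rpow hpne ENNReal.ofReal_ne_top
    simpa [ENNReal.toReal_ofReal hp.le] using this
  -- pointwise scalar Khintchine
  have hlo : ∀ x, (192:ℝ)⁻¹ * h x ≤ ((2:ℝ)^m)⁻¹ * ∑ ε : Fin m → Bool, ‖F ε x‖ ^ p := by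
    intro x
    exact scalar_lower p hp (fun j => f j x)
  have hup : ∀ x, ((2:ℝ)^m)⁻¹ * ∑ ε : Fin m → Bool, ‖F ε x‖ ^ p ≤ M * h x := by
    intro x
    exact scalar_upper p hp k hk1 hk2 (fun j => f j x)
  -- integrability of the square function term
  have hPint : Integrable (fun x => ((2:ℝ)^m)⁻¹ * ∑ ε : Fin m → Bool, ‖F ε x‖ ^ p) μ :=
    (integrable_finset_sum univ (fun ε _ => hgint ε)).const_mul _
  have hmeas : AEStronglyMeasurable h μ := by
    rw [hh]
    apply AEMeasurable.aestronglyMeasurable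
    apply AEMeasurable.pow_const
    exact Finset.aemeasurable_fun_sum _ fun j _ =>
      ((hf j).aestronglyMeasurable.norm.aemeasurable.pow_const 2)
  have hhnon : ∀ x, 0 ≤ h x := fun x => Real.rpow_nonneg
    (Finset.sum_nonneg fun j _ => sq_nonneg _) _
  have hhint : Integrable h μ := by
    apply Integrable.mono' (hPint.const_mul (192:ℝ)) hmeas
    filter_upwards with x
    rw [Real.norm_of_nonneg (hhnon x)]
    have := hlo x
    nlinarith [this]
  -- integral comparisons
  have hAvg : (((2 : ℝ) ^ m)⁻¹ * ∑ ε : Fin m → Bool, ∫ x, ‖F ε x‖ ^ p ∂μ)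
      = ∫ x, ((2:ℝ)^m)⁻¹ * ∑ ε : Fin m → Bool, ‖F ε x‖ ^ p ∂μ := by
    rw [integral_const_mul]
    congr 1
    exact (integral_finset_sum univ (fun ε _ => hgint ε)).symm
  have hIlow : (192:ℝ)⁻¹ * ∫ x, h x ∂μ ≤ ((2 : ℝ) ^ m)⁻¹ * ∑ ε : Fin m → Bool, ∫ x, ‖F ε x‖ ^ p ∂μ := by
    rw [hAvg, ← integral_const_mul]
    exact integral_mono (hhint.const_mul _) hPint hlo
  have hIup : ((2 : ℝ) ^ m)⁻¹ * ∑ ε : Fin m → Bool, ∫ x, ‖F ε x‖ ^ p ∂μ ≤ M * ∫ x, h x ∂μ := by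
    rw [hAvg, ← integral_const_mul]
    exact integral_mono hPint (hhint.const_mul _) hup
  have hIh0 : 0 ≤ ∫ x, h x ∂μ := integral_nonneg hhnon
  have hA0 : 0 ≤ ((2 : ℝ) ^ m)⁻¹ * ∑ ε : Fin m → Bool, ∫ x, ‖F ε x‖ ^ p ∂μ := by
    apply mul_nonneg (by positivity)
    exact Finset.sum_nonneg fun ε _ => integral_nonneg fun x => Real.rpow_nonneg (norm_nonneg _) _
  constructor
  · calc ((192:ℝ)⁻¹) ^ (1/p) * (∫ x, h x ∂μ) ^ (1/p)
        = ((192:ℝ)⁻¹ * ∫ x, h x ∂μ) ^ (1/p) := (Real.mul_rpow (by norm_num) hIh0).symm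
      _ ≤ (((2 : ℝ) ^ m)⁻¹ * ∑ ε : Fin m → Bool, ∫ x, ‖F ε x‖ ^ p ∂μ) ^ (1/p) :=
          Real.rpow_le_rpow (by positivity) hIlow (by positivity)
  · calc (((2 : ℝ) ^ m)⁻¹ * ∑ ε : Fin m → Bool, ∫ x, ‖F ε x‖ ^ p ∂μ) ^ (1/p)
        ≤ (M * ∫ x, h x ∂μ) ^ (1/p) := Real.rpow_le_rpow hA0 hIup (by positivity)
      _ = M ^ (1/p) * (∫ x, h x ∂μ) ^ (1/p) := Real.mul_rpow hMpos.le hIh0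
end

section
/- (Diagonal behavior of parabolic caps, part (i).) There is an absolute constant N_0 (N_0 = 9 suffices) such that the following holds for every N ≥ N_0: if 0 < δ < 1/N and I_1, I_2, I_2′ ⊆ [−1,1] are intervals of length δ with d(I_2, I_2′) ≥ Nδ, then (N_{I_1}(δ²) − N_{I_1}(δ²)) ∩ (N_{I_2}(δ²) − N_{I_2′}(δ²)) = ∅. -/
open Pointwise
/-- The parabolic cap `N_I(σ) = {(ξ, ξ² + t) : ξ ∈ I, |t| ≤ σ} ⊆ ℝ²`. -/
def parabolicCap (I : Set ℝ) (σ : ℝ) : Set (ℝ × ℝ) :=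
  {p | ∃ ξ ∈ I, ∃ t : ℝ, |t| ≤ σ ∧ p = (ξ, ξ ^ 2 + t)}

/-- **Diagonal behavior of parabolic caps, part (i).** There is an absolute constant `N₀`
such that for all `N ≥ N₀`, `0 < δ < 1/N`, and intervals `I₁, I₂, I₂′ ⊆ [−1,1]` of length `δ`
with `d(I₂, I₂′) ≥ Nδ`, the difference sets `N_{I₁}(δ²) − N_{I₁}(δ²)` and
`N_{I₂}(δ²) − N_{I₂′}(δ²)` are disjoint. -/
theorem diagonal_behavior_caps_i :
    ∃ N₀ : ℝ, ∀ N : ℝ, N₀ ≤ N → ∀ δ : ℝ, 0 < δ → δ < 1 / N →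
      ∀ a₁ a₂ a₂' : ℝ,
        Set.Icc a₁ (a₁ + δ) ⊆ Set.Icc (-1 : ℝ) 1 →
        Set.Icc a₂ (a₂ + δ) ⊆ Set.Icc (-1 : ℝ) 1 →
        Set.Icc a₂' (a₂' + δ) ⊆ Set.Icc (-1 : ℝ) 1 →
        (∀ x ∈ Set.Icc a₂ (a₂ + δ), ∀ y ∈ Set.Icc a₂' (a₂' + δ), N * δ ≤ |x - y|) →
        (parabolicCap (Set.Icc a₁ (a₁ + δ)) (δ ^ 2) -
            parabolicCap (Set.Icc a₁ (a₁ + δ)) (δ ^ 2)) ∩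
          (parabolicCap (Set.Icc a₂ (a₂ + δ)) (δ ^ 2) -
            parabolicCap (Set.Icc a₂' (a₂' + δ)) (δ ^ 2)) = ∅ := by
  refine ⟨9, fun N hN δ hδ hδN a₁ a₂ a₂' h₁ h₂ h₂' hsep => ?_⟩
  ext p
  simp only [Set.mem_inter_iff, Set.mem_empty_iff_false, iff_false]
  rintro ⟨hp1, hp2⟩
  obtain ⟨x, hx, y, hy, rfl⟩ := Set.mem_sub.mp hp1
  obtain ⟨u, hu, v, hv, huv⟩ := Set.mem_sub.mp hp2
  obtain ⟨ξ, hξ, t, ht, rfl⟩ := hx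
  obtain ⟨ξ', hξ', t', ht', rfl⟩ := hy
  obtain ⟨η, hη, s, hs, rfl⟩ := hu
  obtain ⟨η', hη', s', hs', rfl⟩ := hv
  have hfst : η - η' = ξ - ξ' := congrArg Prod.fst huv
  have h1 : |ξ - ξ'| ≤ δ := by
    rw [abs_sub_le_iff]
    constructor <;> [skip; skip] <;> linarith [hξ.1, hξ.2, hξ'.1, hξ'.2]
  have h2 : N * δ ≤ |η - η'| := hsep η hη η' hη'
  rw [hfst] at h2
  nlinarith
end

section
/- (Diagonal behavior of parabolic caps, part (ii).) There is an absolute constant N_0 such that the following holds for every N ≥ N_0: if 0 < δ < 1/N and I_1, I_1′, I_2, I_2′ ⊆ [−1,1] are intervals of length δ with d(I_1, I_1′) ≥ Nδ and d(I_2, I_2′) ≥ Nδ, and moreover max(d(I_1, I_2), d(I_1′, I_2′)) ≥ Nδ, then (N_{I_1}(δ²) − N_{I_1′}(δ²)) ∩ (N_{I_2}(δ²) − N_{I_2′}(δ²)) = ∅. -/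
open Pointwise

/-- **Diagonal behavior of parabolic caps, part (ii).** There is an absolute constant `N₀`
such that for all `N ≥ N₀`, `0 < δ < 1/N`, and intervals `I₁, I₁′, I₂, I₂′ ⊆ [−1,1]` of
length `δ` with `d(I₁, I₁′) ≥ Nδ`, `d(I₂, I₂′) ≥ Nδ` and
`max(d(I₁, I₂), d(I₁′, I₂′)) ≥ Nδ`, the difference sets `N_{I₁}(δ²) − N_{I₁′}(δ²)` and
`N_{I₂}(δ²) − N_{I₂′}(δ²)` are disjoint. -/
theorem diagonal_behavior_caps_ii :
    ∃ N₀ : ℝ, ∀ N : ℝ, N₀ ≤ N → ∀ δ : ℝ, 0 < δ → δ < 1 / N →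
      ∀ a₁ a₁' a₂ a₂' : ℝ,
        Set.Icc a₁ (a₁ + δ) ⊆ Set.Icc (-1 : ℝ) 1 →
        Set.Icc a₁' (a₁' + δ) ⊆ Set.Icc (-1 : ℝ) 1 →
        Set.Icc a₂ (a₂ + δ) ⊆ Set.Icc (-1 : ℝ) 1 →
        Set.Icc a₂' (a₂' + δ) ⊆ Set.Icc (-1 : ℝ) 1 →
        (∀ x ∈ Set.Icc a₁ (a₁ + δ), ∀ y ∈ Set.Icc a₁' (a₁' + δ), N * δ ≤ |x - y|) →
        (∀ x ∈ Set.Icc a₂ (a₂ + δ), ∀ y ∈ Set.Icc a₂' (a₂' + δ), N * δ ≤ |x - y|) →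
        ((∀ x ∈ Set.Icc a₁ (a₁ + δ), ∀ y ∈ Set.Icc a₂ (a₂ + δ), N * δ ≤ |x - y|) ∨
          (∀ x ∈ Set.Icc a₁' (a₁' + δ), ∀ y ∈ Set.Icc a₂' (a₂' + δ), N * δ ≤ |x - y|)) →
        (parabolicCap (Set.Icc a₁ (a₁ + δ)) (δ ^ 2) -
            parabolicCap (Set.Icc a₁' (a₁' + δ)) (δ ^ 2)) ∩
          (parabolicCap (Set.Icc a₂ (a₂ + δ)) (δ ^ 2) -
            parabolicCap (Set.Icc a₂' (a₂' + δ)) (δ ^ 2)) = ∅ := by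
  use 2
  intro N hN δ hδ hδN a₁ a₁' a₂ a₂' hI₁ hI₁' hI₂ hI₂' hd₁ hd₂ hmax
  ext p
  simp only [Set.mem_inter_iff, Set.mem_empty_iff_false, iff_false, not_and]
  rintro ⟨u, hu, v, hv, huv⟩ ⟨w, hw, z, hz, hwz⟩
  obtain ⟨ξ₁, hξ₁, t₁, ht₁, rfl⟩ := hu
  obtain ⟨ξ₁', hξ₁', t₁', ht₁', rfl⟩ := hv
  obtain ⟨ξ₂, hξ₂, t₂, ht₂, rfl⟩ := hw
  obtain ⟨ξ₂', hξ₂', t₂', ht₂', rfl⟩ := hz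
  rw [← hwz] at huv
  have h1 : ξ₁ - ξ₁' = ξ₂ - ξ₂' := congrArg Prod.fst huv
  have h2 : ξ₁ ^ 2 + t₁ - (ξ₁' ^ 2 + t₁') = ξ₂ ^ 2 + t₂ - (ξ₂' ^ 2 + t₂') :=
    congrArg Prod.snd huv
  have hx : N * δ ≤ |ξ₁ - ξ₁'| := hd₁ ξ₁ hξ₁ ξ₁' hξ₁'
  have ht₁a := abs_le.1 ht₁
  have ht₁'a := abs_le.1 ht₁'
  have ht₂a := abs_le.1 ht₂
  have ht₂'a := abs_le.1 ht₂'
  have hNpos : (0:ℝ) < N := lt_of_lt_of_le two_pos hN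
  have hfac : 2 * (ξ₁ - ξ₂) * (ξ₁ - ξ₁') = (t₂ - t₂') - (t₁ - t₁') := by
    linear_combination h2 + (ξ₁ - ξ₁' + ξ₂ - ξ₂' - 2 * ξ₂) * h1
  have habs : 2 * (|ξ₁ - ξ₂| * |ξ₁ - ξ₁'|) ≤ 4 * δ ^ 2 := by
    have e : 2 * (|ξ₁ - ξ₂| * |ξ₁ - ξ₁'|) = |2 * (ξ₁ - ξ₂) * (ξ₁ - ξ₁')| := by
      rw [abs_mul, abs_mul, abs_two]; ring
    rw [e, hfac]
    have h := abs_le.2 (⟨by linarith [ht₁a.1, ht₁a.2, ht₁'a.1, ht₁'a.2, ht₂a.1, ht₂a.2,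
      ht₂'a.1, ht₂'a.2], by linarith [ht₁a.1, ht₁a.2, ht₁'a.1, ht₁'a.2, ht₂a.1, ht₂a.2,
      ht₂'a.1, ht₂'a.2]⟩ : -(4 * δ ^ 2) ≤ t₂ - t₂' - (t₁ - t₁') ∧
        t₂ - t₂' - (t₁ - t₁') ≤ 4 * δ ^ 2)
    exact h
  have key : |ξ₁ - ξ₂| * (N * δ) ≤ 2 * δ ^ 2 := by
    have h6 : |ξ₁ - ξ₂| * (N * δ) ≤ |ξ₁ - ξ₂| * |ξ₁ - ξ₁'| :=
      mul_le_mul_of_nonneg_left hx (abs_nonneg _)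
    linarith
  have fin : ¬ (N * δ ≤ |ξ₁ - ξ₂|) := by
    intro hd
    have h7 : (N * δ) * (N * δ) ≤ |ξ₁ - ξ₂| * (N * δ) :=
      mul_le_mul_of_nonneg_right hd (by positivity)
    have h8 : (2 * δ) * (2 * δ) ≤ (N * δ) * (N * δ) :=
      mul_self_le_mul_self (by positivity) (by nlinarith)
    nlinarith
  rcases hmax with h | h
  · exact fin (h ξ₁ hξ₁ ξ₂ hξ₂)
  · have hp := h ξ₁' hξ₁' ξ₂' hξ₂'
    have heq : ξ₁' - ξ₂' = ξ₁ - ξ₂ := by linarith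
    rw [heq] at hp
    exact fin hp
end

section
/- (Parabolic rescaling of bilinear restriction estimates.) Let n ≥ 2, 1 ≤ p, q ≤ ∞, and let C_0 ≥ 0 be a constant such that ‖|E_{Ω′_1}f · E_{Ω′_2}f|^{1/2}‖_{L^p(ℝ^n)} ≤ C_0 (‖f‖_{L^q(Ω′_1)} ‖f‖_{L^q(Ω′_2)})^{1/2} for all pairs of cubes Ω′_1, Ω′_2 ⊆ [−1,1]^{n−1} with d(Ω′_1, Ω′_2) ≥ 1/2 and all f. Let Ω_1, Ω_2 ⊆ [−1,1]^{n−1} be cubes with sides parallel to the coordinate axes and side length δ, and suppose D := d(Ω_1, Ω_2) ≥ 4δ. Then for all f : Ω_1 ∪ Ω_2 → ℂ, ‖|E_{Ω_1}f · E_{Ω_2}f|^{1/2}‖_{L^p(ℝ^n)} ≤ D^{(n−1)/q′ − (n+1)/p} C_0 (‖f‖_{L^q(Ω_1)} ‖f‖_{L^q(Ω_2)})^{1/2}. -/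
open MeasureTheory Real Complex RealInnerProductSpace ENNReal

/-- The paraboloid extension operator
`E_Ω f(x) = ∫_Ω f(ξ) e^{2πi(x′·ξ + x_n |ξ|²)} dξ`, on `ℝ^n = ℝ^{n−1} × ℝ`. -/
noncomputable def parabExt {m : ℕ} (Ω : Set (EuclideanSpace ℝ (Fin m)))
    (f : EuclideanSpace ℝ (Fin m) → ℂ) (x : EuclideanSpace ℝ (Fin m) × ℝ) : ℂ :=
  ∫ ξ in Ω, f ξ * Complex.exp (2 * Real.pi * Complex.I * ((⟪x.1, ξ⟫ + x.2 * ∑ i, ξ i ^ 2 : ℝ)))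

/-- The axis-parallel cube with corner `a` and side length `s`. -/
def cube {m : ℕ} (a : EuclideanSpace ℝ (Fin m)) (s : ℝ) : Set (EuclideanSpace ℝ (Fin m)) :=
  {ξ | ∀ i, ξ i ∈ Set.Icc (a i) (a i + s)}

section Aux

variable {m : ℕ}

local notation "𝔼" => EuclideanSpace ℝ (Fin m)

lemma cube_measurable (a : 𝔼) (s : ℝ) : MeasurableSet (cube a s) := by
  have : cube a s = ⋂ i, (fun ξ : 𝔼 => ξ i) ⁻¹' Set.Icc (a i) (a i + s) := by
    ext ξ; simp [cube, Set.mem_iInter]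
  rw [this]
  exact MeasurableSet.iInter fun i =>
    ((continuous_apply i).comp (PiLp.continuous_ofLp 2 _)).measurable measurableSet_Icc

lemma cube_preimage (a c : 𝔼) (s : ℝ) {D : ℝ} (hD : 0 < D) :
    (fun η : 𝔼 => c + D • η) ⁻¹' cube a s = cube (D⁻¹ • (a - c)) (s / D) := by
  ext η
  simp only [cube, Set.mem_preimage, Set.mem_setOf_eq, Set.mem_Icc, PiLp.add_apply,
    PiLp.smul_apply, PiLp.sub_apply, smul_eq_mul]
  refine forall_congr' fun i => ?_
  rw [inv_mul_eq_div, ← add_div, div_le_iff₀ hD, le_div_iff₀ hD]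
  constructor
  · rintro ⟨h1, h2⟩; constructor <;> nlinarith
  · rintro ⟨h1, h2⟩; constructor <;> nlinarith

/-- The affine change of variables `η ↦ c + D • η` as a homeomorphism. -/
noncomputable def shiftSmulHomeo (c : 𝔼) {D : ℝ} (hD : D ≠ 0) : 𝔼 ≃ₜ 𝔼 :=
  (Homeomorph.smulOfNeZero D hD).trans (Homeomorph.addLeft c)

lemma shiftSmulHomeo_apply (c : 𝔼) {D : ℝ} (hD : D ≠ 0) (η : 𝔼) :
    shiftSmulHomeo c hD η = c + D • η := rfl

lemma map_shiftSmul (c : 𝔼) {D : ℝ} (hD : D ≠ 0) :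
    Measure.map (fun η : 𝔼 => c + D • η) volume
      = ENNReal.ofReal |(D ^ m)⁻¹| • volume := by
  have h1 : (fun η : 𝔼 => c + D • η) = (fun ξ : 𝔼 => c + ξ) ∘ (fun η : 𝔼 => D • η) := rfl
  rw [h1, ← Measure.map_map (measurable_const_add c) (measurable_const_smul D),
    Measure.map_addHaar_smul volume hD, Measure.map_smul,
    MeasureTheory.map_add_left_eq_self volume c, finrank_euclideanSpace_fin]

lemma integral_comp_shiftSmul (c : 𝔼) {D : ℝ} (hD : 0 < D) {Ω : Set 𝔼} (hΩ : MeasurableSet Ω)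
    (F : 𝔼 → ℂ) :
    ∫ η in (fun η : 𝔼 => c + D • η) ⁻¹' Ω, F (c + D • η)
      = ((D ^ m)⁻¹ : ℝ) • ∫ ξ in Ω, F ξ := by
  have hemb := (shiftSmulHomeo c hD.ne').measurableEmbedding
  have hmeas : Measurable (fun η : 𝔼 => c + D • η) :=
    (measurable_const_smul D).const_add c
  calc ∫ η in (fun η : 𝔼 => c + D • η) ⁻¹' Ω, F (c + D • η)
      = ∫ ξ, F ξ ∂(Measure.map (fun η : 𝔼 => c + D • η)
          (volume.restrict ((fun η : 𝔼 => c + D • η) ⁻¹' Ω))) := (hemb.integral_map F).symm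
    _ = ∫ ξ, F ξ ∂((Measure.map (fun η : 𝔼 => c + D • η) volume).restrict Ω) := by
        rw [Measure.restrict_map hmeas hΩ]
    _ = ((D ^ m)⁻¹ : ℝ) • ∫ ξ in Ω, F ξ := by
        rw [map_shiftSmul c hD.ne', Measure.restrict_smul, integral_smul_measure,
          ENNReal.toReal_ofReal (abs_nonneg _), abs_of_pos (by positivity)]

lemma eLpNorm_comp_shiftSmul (c : 𝔼) {D : ℝ} (hD : 0 < D) {Ω : Set 𝔼} (hΩ : MeasurableSet Ω)
    (f : 𝔼 → ℂ) (q : ℝ≥0∞) :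
    eLpNorm (fun η => f (c + D • η)) q
        (volume.restrict ((fun η : 𝔼 => c + D • η) ⁻¹' Ω))
      = ENNReal.ofReal ((D ^ m)⁻¹) ^ (1 / q).toReal * eLpNorm f q (volume.restrict Ω) := by
  have hemb : MeasurableEmbedding (fun η : 𝔼 => c + D • η) :=
    (shiftSmulHomeo c hD.ne').measurableEmbedding
  have hmeas : Measurable (fun η : 𝔼 => c + D • η) :=
    (measurable_const_smul D).const_add c
  have h1 : (fun η : 𝔼 => f (c + D • η)) = f ∘ (fun η : 𝔼 => c + D • η) := rfl
  have hk : (ENNReal.ofReal |(D ^ m)⁻¹|) ≠ 0 := by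
    rw [Ne, ENNReal.ofReal_eq_zero, not_le]; positivity
  rw [h1, ← hemb.eLpNorm_map_measure, ← Measure.restrict_map hmeas hΩ, map_shiftSmul c hD.ne',
    Measure.restrict_smul, eLpNorm_smul_measure_of_ne_zero hk, smul_eq_mul,
    abs_of_pos (by positivity : (0:ℝ) < (D ^ m)⁻¹)]

end Aux
section Phase

variable {m : ℕ}

local notation "𝔼" => EuclideanSpace ℝ (Fin m)

lemma phase_identity (c : 𝔼) (D : ℝ) (x : 𝔼 × ℝ) (η : 𝔼) :
    (⟪(D • x.1 + (2 * D * x.2) • c : 𝔼), η⟫ + (D ^ 2 * x.2) * ∑ i, η i ^ 2 : ℝ)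
      = (⟪x.1, (c + D • η : 𝔼)⟫ + x.2 * ∑ i, (c + D • η) i ^ 2)
        - (⟪x.1, c⟫ + x.2 * ∑ i, c i ^ 2) := by
  simp only [PiLp.inner_apply, RCLike.inner_apply, conj_trivial, PiLp.add_apply,
    PiLp.smul_apply, smul_eq_mul, Finset.mul_sum, ← Finset.sum_add_distrib,
    ← Finset.sum_sub_distrib]
  exact Finset.sum_congr rfl fun i _ => by ring

lemma exp_two_pi_I_sub (r s : ℝ) :
    Complex.exp (2 * Real.pi * Complex.I * ((r - s : ℝ) : ℂ))
      = Complex.exp (2 * Real.pi * Complex.I * (r : ℂ)) *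
          (Complex.exp (2 * Real.pi * Complex.I * (s : ℂ)))⁻¹ := by
  rw [Complex.ofReal_sub, mul_sub, Complex.exp_sub, div_eq_mul_inv]

lemma norm_exp_two_pi_I (r : ℝ) :
    ‖Complex.exp (2 * Real.pi * Complex.I * (r : ℂ))‖ = 1 := by
  have h : 2 * (Real.pi : ℂ) * Complex.I * (r : ℂ) = ((2 * Real.pi * r : ℝ) : ℂ) * Complex.I := by
    push_cast; ring
  rw [h, Complex.norm_exp_ofReal_mul_I]

lemma parabExt_comp (a c : 𝔼) (s : ℝ) {D : ℝ} (hD : 0 < D) (f : 𝔼 → ℂ) (x : 𝔼 × ℝ) :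
    parabExt (cube (D⁻¹ • (a - c)) (s / D)) (fun η => f (c + D • η))
        (D • x.1 + (2 * D * x.2) • c, D ^ 2 * x.2)
      = ((D ^ m : ℝ)⁻¹ : ℂ) *
          (Complex.exp (2 * Real.pi * Complex.I * ((⟪x.1, c⟫ + x.2 * ∑ i, c i ^ 2 : ℝ))))⁻¹ *
          parabExt (cube a s) f x := by
  unfold parabExt
  rw [← cube_preimage a c s hD]
  have key := integral_comp_shiftSmul c hD (cube_measurable a s)
    (fun ξ : 𝔼 => f ξ * Complex.exp (2 * Real.pi * Complex.I *
        ((⟪x.1, ξ⟫ + x.2 * ∑ i, ξ i ^ 2 : ℝ)))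
      * (Complex.exp (2 * Real.pi * Complex.I *
        ((⟪x.1, c⟫ + x.2 * ∑ i, c i ^ 2 : ℝ))))⁻¹)
  simp only at key
  have hpt : ∀ η : 𝔼,
      f (c + D • η) * Complex.exp (2 * Real.pi * Complex.I *
          ((⟪((D • x.1 + (2 * D * x.2) • c, D ^ 2 * x.2) : 𝔼 × ℝ).1, η⟫
            + ((D • x.1 + (2 * D * x.2) • c, D ^ 2 * x.2) : 𝔼 × ℝ).2 * ∑ i, η i ^ 2 : ℝ)))
        = f (c + D • η) * Complex.exp (2 * Real.pi * Complex.I *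
              ((⟪x.1, (c + D • η : 𝔼)⟫ + x.2 * ∑ i, (c + D • η) i ^ 2 : ℝ)))
            * (Complex.exp (2 * Real.pi * Complex.I *
              ((⟪x.1, c⟫ + x.2 * ∑ i, c i ^ 2 : ℝ))))⁻¹ := by
    intro η
    simp only
    rw [phase_identity c D x η, exp_two_pi_I_sub, ← mul_assoc]
  rw [integral_congr_ae (Filter.Eventually.of_forall hpt), key, integral_mul_const, real_smul]
  push_cast
  ring

lemma norm_parabExt_comp (a c : 𝔼) (s : ℝ) {D : ℝ} (hD : 0 < D) (f : 𝔼 → ℂ) (x : 𝔼 × ℝ) :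
    ‖parabExt (cube (D⁻¹ • (a - c)) (s / D)) (fun η => f (c + D • η))
        (D • x.1 + (2 * D * x.2) • c, D ^ 2 * x.2)‖
      = (D ^ m : ℝ)⁻¹ * ‖parabExt (cube a s) f x‖ := by
  rw [parabExt_comp a c s hD f x, norm_mul, norm_mul, norm_inv, norm_inv, norm_exp_two_pi_I,
    inv_one, mul_one, Complex.norm_real, Real.norm_eq_abs,
    abs_of_pos (show (0:ℝ) < D ^ m by positivity)]

end Phase
section ProdMeasure

lemma smul_prod_meas {α β : Type*} [MeasurableSpace α] [MeasurableSpace β]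
    (k : ℝ≥0∞) (μ : Measure α) [SFinite μ] (ν : Measure β) [SFinite ν] :
    (k • μ).prod ν = k • (μ.prod ν) := by
  ext s hs
  simp only [Measure.prod_apply hs, Measure.smul_apply, lintegral_smul_measure, smul_eq_mul]

lemma prod_smul_meas {α β : Type*} [MeasurableSpace α] [MeasurableSpace β]
    (k : ℝ≥0∞) (hk : k ≠ ⊤) (μ : Measure α) [SFinite μ] (ν : Measure β) [SFinite ν] :
    μ.prod (k • ν) = k • (μ.prod ν) := by
  ext s hs
  rw [Measure.prod_apply hs, Measure.smul_apply, Measure.prod_apply hs, smul_eq_mul,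
    ← lintegral_const_mul' k _ hk]
  simp only [Measure.smul_apply, smul_eq_mul]

variable {m : ℕ}

local notation "𝔼" => EuclideanSpace ℝ (Fin m)

/-- The parabolic rescaling map on `ℝ^{n-1} × ℝ` as a homeomorphism. -/
noncomputable def parabScale (c : 𝔼) (D : ℝ) (hD : D ≠ 0) : (𝔼 × ℝ) ≃ₜ (𝔼 × ℝ) where
  toFun x := (D • x.1 + (2 * D * x.2) • c, D ^ 2 * x.2)
  invFun y := (D⁻¹ • y.1 - (2 * ((D ^ 2)⁻¹ * y.2)) • c, (D ^ 2)⁻¹ * y.2)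
  left_inv x := by
    have hD2 : (D : ℝ) ^ 2 ≠ 0 := pow_ne_zero _ hD
    refine Prod.ext ?_ ?_
    · show D⁻¹ • (D • x.1 + (2 * D * x.2) • c) - (2 * ((D ^ 2)⁻¹ * (D ^ 2 * x.2))) • c = x.1
      rw [smul_add, smul_smul, smul_smul, inv_mul_cancel₀ hD, one_smul,
        show D⁻¹ * (2 * D * x.2) = 2 * x.2 by field_simp,
        show (D ^ 2)⁻¹ * (D ^ 2 * x.2) = x.2 by field_simp,
        show (2 : ℝ) * x.2 = 2 * x.2 from rfl]
      abel
    · show (D ^ 2)⁻¹ * (D ^ 2 * x.2) = x.2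
      field_simp
  right_inv y := by
    have hD2 : (D : ℝ) ^ 2 ≠ 0 := pow_ne_zero _ hD
    refine Prod.ext ?_ ?_
    · show D • (D⁻¹ • y.1 - (2 * ((D ^ 2)⁻¹ * y.2)) • c)
          + (2 * D * ((D ^ 2)⁻¹ * y.2)) • c = y.1
      rw [smul_sub, smul_smul, smul_smul, mul_inv_cancel₀ hD, one_smul,
        show D * (2 * ((D ^ 2)⁻¹ * y.2)) = 2 * D * ((D ^ 2)⁻¹ * y.2) by ring]
      abel
    · show D ^ 2 * ((D ^ 2)⁻¹ * y.2) = y.2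
      field_simp
  continuous_toFun := by
    refine Continuous.prodMk ?_ ?_
    · exact ((continuous_const_smul D).comp continuous_fst).add
        (((continuous_const.mul continuous_snd).smul continuous_const))
    · exact continuous_const.mul continuous_snd
  continuous_invFun := by
    refine Continuous.prodMk ?_ ?_
    · exact ((continuous_const_smul D⁻¹).comp continuous_fst).sub
        (((continuous_const.mul (continuous_const.mul continuous_snd)).smul continuous_const))
    · exact continuous_const.mul continuous_snd

lemma map_parabScale_volume (c : 𝔼) {D : ℝ} (hD : 0 < D) :
    Measure.map (fun x : 𝔼 × ℝ => ((D • x.1 + (2 * D * x.2) • c : 𝔼), D ^ 2 * x.2)) volume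
      = (ENNReal.ofReal ((D ^ m)⁻¹) * ENNReal.ofReal ((D ^ 2)⁻¹)) • volume := by
  have hSmeas : Measurable (fun x : 𝔼 × ℝ => ((x.1 + (2 * x.2) • c : 𝔼), x.2)) := by
    refine Measurable.prodMk ?_ measurable_snd
    exact measurable_fst.add ((measurable_const.mul measurable_snd).smul measurable_const)
  have hSigMeas : Measurable (fun y : 𝔼 × ℝ => ((D • y.1 : 𝔼), D ^ 2 * y.2)) := by
    refine Measurable.prodMk ?_ (measurable_const.mul measurable_snd)
    exact measurable_fst.const_smul D
  -- the shear is measure preserving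
  have hS : MeasurePreserving (fun x : 𝔼 × ℝ => ((x.1 + (2 * x.2) • c : 𝔼), x.2))
      volume volume := by
    have hS' : MeasurePreserving (fun p : ℝ × 𝔼 => (p.1, p.2 + (2 * p.1) • c))
        ((volume : Measure ℝ).prod volume) ((volume : Measure ℝ).prod volume) := by
      refine MeasurePreserving.skew_product (f := @id ℝ)
        (g := fun t (η : 𝔼) => η + (2 * t) • c)
        (MeasurePreserving.id (volume : Measure ℝ)) ?_
        (Filter.Eventually.of_forall fun t => ?_)
      · exact measurable_snd.add ((measurable_const.mul measurable_fst).smul measurable_const)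
      · exact MeasureTheory.map_add_right_eq_self volume ((2 * t) • c)
    have h1 : MeasurePreserving (Prod.swap : 𝔼 × ℝ → ℝ × 𝔼)
        ((volume : Measure 𝔼).prod (volume : Measure ℝ))
        ((volume : Measure ℝ).prod (volume : Measure 𝔼)) := Measure.measurePreserving_swap
    have h2 : MeasurePreserving (Prod.swap : ℝ × 𝔼 → 𝔼 × ℝ)
        ((volume : Measure ℝ).prod (volume : Measure 𝔼))
        ((volume : Measure 𝔼).prod (volume : Measure ℝ)) := Measure.measurePreserving_swap
    exact (h2.comp (hS'.comp h1))
  -- the diagonal scaling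
  have hSig : Measure.map (fun y : 𝔼 × ℝ => ((D • y.1 : 𝔼), D ^ 2 * y.2)) volume
      = (ENNReal.ofReal ((D ^ m)⁻¹) * ENNReal.ofReal ((D ^ 2)⁻¹)) • volume := by
    have hφ : Measurable (fun y : 𝔼 => D • y) := measurable_const_smul D
    have hψ : Measurable (fun t : ℝ => D ^ 2 * t) := measurable_const_mul _
    have h1 : (fun y : 𝔼 × ℝ => ((D • y.1 : 𝔼), D ^ 2 * y.2))
        = Prod.map (fun y : 𝔼 => D • y) (fun t : ℝ => D ^ 2 * t) := rfl
    rw [MeasureTheory.Measure.volume_eq_prod, h1, ← Measure.map_prod_map _ _ hφ hψ,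
      Measure.map_addHaar_smul volume hD.ne', Real.map_volume_mul_left (pow_ne_zero 2 hD.ne'),
      finrank_euclideanSpace_fin,
      abs_of_pos (show (0:ℝ) < (D ^ m)⁻¹ by positivity),
      abs_of_pos (show (0:ℝ) < (D ^ 2)⁻¹ by positivity)]
    rw [smul_prod_meas, prod_smul_meas _ ENNReal.ofReal_ne_top, smul_smul]
  have hcomp : (fun x : 𝔼 × ℝ => ((D • x.1 + (2 * D * x.2) • c : 𝔼), D ^ 2 * x.2))
      = (fun y : 𝔼 × ℝ => ((D • y.1 : 𝔼), D ^ 2 * y.2))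
        ∘ (fun x : 𝔼 × ℝ => ((x.1 + (2 * x.2) • c : 𝔼), x.2)) := by
    funext x
    refine Prod.ext ?_ rfl
    show D • x.1 + (2 * D * x.2) • c = D • (x.1 + (2 * x.2) • c)
    rw [smul_add, smul_smul, show D * (2 * x.2) = 2 * D * x.2 by ring]
  rw [hcomp, ← Measure.map_map hSigMeas hSmeas, hS.map_eq, hSig]

end ProdMeasure
/-- **Parabolic rescaling of bilinear restriction estimates.** Suppose the bilinear
extension estimate with constant `C₀` holds for all pairs of cubes in `[−1,1]^{n−1}`
separated by distance at least `1/2`. If `Ω₁, Ω₂ ⊆ [−1,1]^{n−1}` are axis-parallel cubes of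
side `δ` with `D := d(Ω₁, Ω₂) ≥ 4δ`, then for all `f`,
`‖|E_{Ω₁}f ⋅ E_{Ω₂}f|^{1/2}‖_{L^p} ≤ D^{(n−1)/q′ − (n+1)/p} C₀ (‖f‖_{L^q(Ω₁)} ‖f‖_{L^q(Ω₂)})^{1/2}`. -/
theorem parabolic_rescaling_bilinear (n : ℕ) (hn : 2 ≤ n)
    (p q q' : ℝ≥0∞) (hp : 1 ≤ p) (hq : 1 ≤ q) (hq' : 1 / q + 1 / q' = 1)
    (C₀ : ℝ) (hC₀ : 0 ≤ C₀)
    (hBR : ∀ (a₁' a₂' : EuclideanSpace ℝ (Fin (n - 1))) (s₁' s₂' : ℝ),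
      0 < s₁' → 0 < s₂' →
      cube a₁' s₁' ⊆ {ξ | ∀ i, ξ i ∈ Set.Icc (-1 : ℝ) 1} →
      cube a₂' s₂' ⊆ {ξ | ∀ i, ξ i ∈ Set.Icc (-1 : ℝ) 1} →
      (∀ x ∈ cube a₁' s₁', ∀ y ∈ cube a₂' s₂', (1 : ℝ) / 2 ≤ dist x y) →
      ∀ f : EuclideanSpace ℝ (Fin (n - 1)) → ℂ,
        eLpNorm (fun x : EuclideanSpace ℝ (Fin (n - 1)) × ℝ =>
            Real.sqrt (‖parabExt (cube a₁' s₁') f x‖ * ‖parabExt (cube a₂' s₂') f x‖))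
          p volume ≤
          ENNReal.ofReal C₀ *
            (eLpNorm f q (volume.restrict (cube a₁' s₁')) *
              eLpNorm f q (volume.restrict (cube a₂' s₂'))) ^ (1 / (2 : ℝ)))
    (a₁ a₂ : EuclideanSpace ℝ (Fin (n - 1))) (δ : ℝ) (hδ : 0 < δ)
    (hΩ₁ : cube a₁ δ ⊆ {ξ | ∀ i, ξ i ∈ Set.Icc (-1 : ℝ) 1})
    (hΩ₂ : cube a₂ δ ⊆ {ξ | ∀ i, ξ i ∈ Set.Icc (-1 : ℝ) 1})
    (D : ℝ) (hD4δ : 4 * δ ≤ D)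
    (hD_le : ∀ x ∈ cube a₁ δ, ∀ y ∈ cube a₂ δ, D ≤ dist x y)
    (hD_inf : ∀ ε : ℝ, 0 < ε → ∃ x ∈ cube a₁ δ, ∃ y ∈ cube a₂ δ, dist x y < D + ε) :
    ∀ f : EuclideanSpace ℝ (Fin (n - 1)) → ℂ,
      eLpNorm (fun x : EuclideanSpace ℝ (Fin (n - 1)) × ℝ =>
          Real.sqrt (‖parabExt (cube a₁ δ) f x‖ * ‖parabExt (cube a₂ δ) f x‖)) p volume ≤
        ENNReal.ofReal
            (D ^ ((n - 1 : ℝ) * (1 / q').toReal - (n + 1 : ℝ) * (1 / p).toReal) * C₀) *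
          (eLpNorm f q (volume.restrict (cube a₁ δ)) *
            eLpNorm f q (volume.restrict (cube a₂ δ))) ^ (1 / (2 : ℝ)) := by
  intro f
  have hD : 0 < D := lt_of_lt_of_le (by positivity) hD4δ
  -- the common center
  set c : EuclideanSpace ℝ (Fin (n - 1)) :=
    WithLp.toLp 2 (fun i => (min (a₁ i) (a₂ i) + max (a₁ i) (a₂ i) + δ) / 2) with hcdef
  -- componentwise distance between the corners
  have habs : ∀ i, |a₁ i - a₂ i| ≤ D + 2 * δ := by
    intro i
    refine le_of_forall_pos_le_add fun ε hε => ?_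
    obtain ⟨x, hx, y, hy, hxy⟩ := hD_inf ε hε
    have hxi := hx i
    have hyi := hy i
    simp only [Set.mem_Icc] at hxi hyi
    have hcoord : |x i - y i| ≤ dist x y := by
      calc |x i - y i| = dist (x i) (y i) := (Real.dist_eq _ _).symm
        _ = Real.sqrt (dist (x i) (y i) ^ 2) := (Real.sqrt_sq dist_nonneg).symm
        _ ≤ Real.sqrt (∑ j, dist (x j) (y j) ^ 2) := Real.sqrt_le_sqrt
            (Finset.single_le_sum (f := fun j => dist (x j) (y j) ^ 2)
              (fun j _ => sq_nonneg _) (Finset.mem_univ i))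
        _ = dist x y := (EuclideanSpace.dist_eq x y).symm
    have h1 : |a₁ i - a₂ i| ≤ |a₁ i - x i| + |x i - y i| + |y i - a₂ i| := by
      calc |a₁ i - a₂ i| ≤ |a₁ i - y i| + |y i - a₂ i| := abs_sub_le _ _ _
        _ ≤ (|a₁ i - x i| + |x i - y i|) + |y i - a₂ i| := by
            linarith [abs_sub_le (a₁ i) (x i) (y i)]
    have h2 : |a₁ i - x i| ≤ δ := abs_le.2 ⟨by linarith, by linarith⟩
    have h3 : |y i - a₂ i| ≤ δ := abs_le.2 ⟨by linarith, by linarith⟩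
    linarith
  -- every point of the two cubes is within (D+3δ)/2 of c in each coordinate
  have hcc : ∀ ξ, (ξ ∈ cube a₁ δ ∨ ξ ∈ cube a₂ δ) → ∀ i,
      |ξ i - c i| ≤ (D + 3 * δ) / 2 := by
    intro ξ hξ i
    have hci : c i = (min (a₁ i) (a₂ i) + max (a₁ i) (a₂ i) + δ) / 2 := rfl
    have hbd : min (a₁ i) (a₂ i) ≤ ξ i ∧ ξ i ≤ max (a₁ i) (a₂ i) + δ := by
      rcases hξ with h | h
      · have := h i; simp only [Set.mem_Icc] at this
        exact ⟨le_trans (min_le_left _ _) this.1,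
          le_trans this.2 (by have := le_max_left (a₁ i) (a₂ i); linarith)⟩
      · have := h i; simp only [Set.mem_Icc] at this
        exact ⟨le_trans (min_le_right _ _) this.1,
          le_trans this.2 (by have := le_max_right (a₁ i) (a₂ i); linarith)⟩
    have hml : max (a₁ i) (a₂ i) - min (a₁ i) (a₂ i) = |a₁ i - a₂ i| := by
      rw [max_sub_min_eq_abs, abs_sub_comm]
    have := habs i
    rw [hci]
    exact abs_le.2 ⟨by linarith [hbd.1, hbd.2], by linarith [hbd.1, hbd.2]⟩
  -- the rescaled cubes
  have hpre₁ : (fun η : EuclideanSpace ℝ (Fin (n - 1)) => c + D • η) ⁻¹' cube a₁ δ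
      = cube (D⁻¹ • (a₁ - c)) (δ / D) := cube_preimage a₁ c δ hD
  have hpre₂ : (fun η : EuclideanSpace ℝ (Fin (n - 1)) => c + D • η) ⁻¹' cube a₂ δ
      = cube (D⁻¹ • (a₂ - c)) (δ / D) := cube_preimage a₂ c δ hD
  have hδ' : 0 < δ / D := by positivity
  -- subset conditions
  have hsub : ∀ (a : EuclideanSpace ℝ (Fin (n - 1))),
      (∀ ξ ∈ cube a δ, ∀ i, |ξ i - c i| ≤ (D + 3 * δ) / 2) →
      cube (D⁻¹ • (a - c)) (δ / D) ⊆ {ξ | ∀ i, ξ i ∈ Set.Icc (-1 : ℝ) 1} := by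
    intro a ha η hη
    have hφη : c + D • η ∈ cube a δ := by
      have : η ∈ (fun η : EuclideanSpace ℝ (Fin (n - 1)) => c + D • η) ⁻¹' cube a δ := by
        rw [cube_preimage a c δ hD]; exact hη
      exact this
    intro i
    have h2 := ha _ hφη i
    have h3 : (c + D • η) i - c i = D * η i := by
      simp [PiLp.add_apply, PiLp.smul_apply]
    rw [h3, abs_mul, abs_of_pos hD] at h2
    have h4 : D * |η i| ≤ D * 1 := by nlinarith
    have h5 : |η i| ≤ 1 := le_of_mul_le_mul_left h4 hD
    rw [Set.mem_Icc]
    exact ⟨by linarith [abs_le.1 h5 |>.1], abs_le.1 h5 |>.2⟩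
  have hsub₁ := hsub a₁ (fun ξ hξ => hcc ξ (Or.inl hξ))
  have hsub₂ := hsub a₂ (fun ξ hξ => hcc ξ (Or.inr hξ))
  -- separation condition
  have hsep : ∀ x ∈ cube (D⁻¹ • (a₁ - c)) (δ / D), ∀ y ∈ cube (D⁻¹ • (a₂ - c)) (δ / D),
      (1 : ℝ) / 2 ≤ dist x y := by
    intro x hx y hy
    rw [← hpre₁] at hx
    rw [← hpre₂] at hy
    have h1 := hD_le _ hx _ hy
    have h2 : dist ((c + D • x : EuclideanSpace ℝ (Fin (n - 1)))) (c + D • y)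
        = D * dist x y := by
      rw [dist_add_left, dist_smul₀, Real.norm_eq_abs, abs_of_pos hD]
    rw [h2] at h1
    nlinarith [dist_nonneg (x := x) (y := y)]
  have hmain := hBR (D⁻¹ • (a₁ - c)) (D⁻¹ • (a₂ - c)) (δ / D) (δ / D) hδ' hδ' hsub₁ hsub₂ hsep
    (fun η => f (c + D • η))
  -- rewrite the left-hand side
  have hfun : (fun x : EuclideanSpace ℝ (Fin (n - 1)) × ℝ =>
        Real.sqrt (‖parabExt (cube a₁ δ) f x‖ * ‖parabExt (cube a₂ δ) f x‖))
      = (D ^ (n - 1) : ℝ) •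
          ((fun y : EuclideanSpace ℝ (Fin (n - 1)) × ℝ =>
              Real.sqrt (‖parabExt (cube (D⁻¹ • (a₁ - c)) (δ / D)) (fun η => f (c + D • η)) y‖ *
                ‖parabExt (cube (D⁻¹ • (a₂ - c)) (δ / D)) (fun η => f (c + D • η)) y‖))
            ∘ (fun x : EuclideanSpace ℝ (Fin (n - 1)) × ℝ =>
                ((D • x.1 + (2 * D * x.2) • c : EuclideanSpace ℝ (Fin (n - 1))), D ^ 2 * x.2))) := by
    funext x
    show Real.sqrt (‖parabExt (cube a₁ δ) f x‖ * ‖parabExt (cube a₂ δ) f x‖)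
      = (D ^ (n - 1) : ℝ) *
          Real.sqrt (‖parabExt (cube (D⁻¹ • (a₁ - c)) (δ / D)) (fun η => f (c + D • η))
              (D • x.1 + (2 * D * x.2) • c, D ^ 2 * x.2)‖ *
            ‖parabExt (cube (D⁻¹ • (a₂ - c)) (δ / D)) (fun η => f (c + D • η))
              (D • x.1 + (2 * D * x.2) • c, D ^ 2 * x.2)‖)
    rw [norm_parabExt_comp a₁ c δ hD f x, norm_parabExt_comp a₂ c δ hD f x,
      show ((D ^ (n - 1) : ℝ)⁻¹ * ‖parabExt (cube a₁ δ) f x‖) *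
          ((D ^ (n - 1) : ℝ)⁻¹ * ‖parabExt (cube a₂ δ) f x‖)
        = ((D ^ (n - 1) : ℝ)⁻¹) ^ 2 * (‖parabExt (cube a₁ δ) f x‖ * ‖parabExt (cube a₂ δ) f x‖)
        from by ring,
      Real.sqrt_mul (sq_nonneg _), Real.sqrt_sq (by positivity), ← mul_assoc,
      mul_inv_cancel₀ (by positivity), one_mul]
  have hTemb : MeasurableEmbedding (fun x : EuclideanSpace ℝ (Fin (n - 1)) × ℝ =>
      ((D • x.1 + (2 * D * x.2) • c : EuclideanSpace ℝ (Fin (n - 1))), D ^ 2 * x.2)) :=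
    (parabScale c D hD.ne').measurableEmbedding
  have hK0 : (ENNReal.ofReal ((D ^ (n - 1) : ℝ)⁻¹) * ENNReal.ofReal ((D ^ 2 : ℝ)⁻¹)) ≠ 0 := by
    rw [Ne, mul_eq_zero, ENNReal.ofReal_eq_zero, ENNReal.ofReal_eq_zero]
    push_neg
    constructor <;> positivity
  have hLHS : eLpNorm (fun x : EuclideanSpace ℝ (Fin (n - 1)) × ℝ =>
        Real.sqrt (‖parabExt (cube a₁ δ) f x‖ * ‖parabExt (cube a₂ δ) f x‖)) p volume
      = ENNReal.ofReal (D ^ (n - 1)) *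
          ((ENNReal.ofReal ((D ^ (n - 1) : ℝ)⁻¹) * ENNReal.ofReal ((D ^ 2 : ℝ)⁻¹)) ^ (1 / p).toReal *
            eLpNorm (fun x : EuclideanSpace ℝ (Fin (n - 1)) × ℝ =>
              Real.sqrt (‖parabExt (cube (D⁻¹ • (a₁ - c)) (δ / D)) (fun η => f (c + D • η)) x‖ *
                ‖parabExt (cube (D⁻¹ • (a₂ - c)) (δ / D)) (fun η => f (c + D • η)) x‖)) p volume) := by
    have hcomp : eLpNorm ((fun y : EuclideanSpace ℝ (Fin (n - 1)) × ℝ =>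
          Real.sqrt (‖parabExt (cube (D⁻¹ • (a₁ - c)) (δ / D)) (fun η => f (c + D • η)) y‖ *
            ‖parabExt (cube (D⁻¹ • (a₂ - c)) (δ / D)) (fun η => f (c + D • η)) y‖)) ∘
          (fun x : EuclideanSpace ℝ (Fin (n - 1)) × ℝ =>
            ((D • x.1 + (2 * D * x.2) • c : EuclideanSpace ℝ (Fin (n - 1))), D ^ 2 * x.2)))
          p volume
        = (ENNReal.ofReal ((D ^ (n - 1) : ℝ)⁻¹) * ENNReal.ofReal ((D ^ 2 : ℝ)⁻¹)) ^ (1 / p).toReal *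
          eLpNorm (fun x : EuclideanSpace ℝ (Fin (n - 1)) × ℝ =>
              Real.sqrt (‖parabExt (cube (D⁻¹ • (a₁ - c)) (δ / D)) (fun η => f (c + D • η)) x‖ *
                ‖parabExt (cube (D⁻¹ • (a₂ - c)) (δ / D)) (fun η => f (c + D • η)) x‖)) p volume := by
      rw [← hTemb.eLpNorm_map_measure, map_parabScale_volume c hD,
        eLpNorm_smul_measure_of_ne_zero hK0, smul_eq_mul]
    rw [hfun, eLpNorm_const_smul, hcomp, ← ofReal_norm,
      Real.norm_of_nonneg (by positivity : (0:ℝ) ≤ D ^ (n - 1)), ← mul_assoc]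
  -- rewrite the norms on the right
  have hN₁ : eLpNorm (fun η => f (c + D • η)) q
        (volume.restrict (cube (D⁻¹ • (a₁ - c)) (δ / D)))
      = ENNReal.ofReal ((D ^ (n - 1) : ℝ)⁻¹) ^ (1 / q).toReal *
          eLpNorm f q (volume.restrict (cube a₁ δ)) := by
    rw [← hpre₁]
    exact eLpNorm_comp_shiftSmul c hD (cube_measurable a₁ δ) f q
  have hN₂ : eLpNorm (fun η => f (c + D • η)) q
        (volume.restrict (cube (D⁻¹ • (a₂ - c)) (δ / D)))
      = ENNReal.ofReal ((D ^ (n - 1) : ℝ)⁻¹) ^ (1 / q).toReal *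
          eLpNorm f q (volume.restrict (cube a₂ δ)) := by
    rw [← hpre₂]
    exact eLpNorm_comp_shiftSmul c hD (cube_measurable a₂ δ) f q
  -- exponent bookkeeping
  have hq1 : 1 / q ≠ ⊤ := by
    intro h; rw [h, top_add] at hq'; exact ENNReal.top_ne_one hq'
  have hq'1 : 1 / q' ≠ ⊤ := by
    intro h; rw [h, add_top] at hq'; exact ENNReal.top_ne_one hq'
  have hsum : (1 / q).toReal + (1 / q').toReal = 1 := by
    rw [← ENNReal.toReal_add hq1 hq'1, hq', ENNReal.toReal_one]
  have hmcast : ((n - 1 : ℕ) : ℝ) = (n : ℝ) - 1 := by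
    have h1 : 1 ≤ n := by omega
    push_cast [h1]
    ring
  set β := (1 / q).toReal with hβ
  set α := (1 / p).toReal with hα
  have e0 : ENNReal.ofReal D ≠ 0 := (ENNReal.ofReal_pos.2 hD).ne'
  have eT : ENNReal.ofReal D ≠ ⊤ := ENNReal.ofReal_ne_top
  have h1 : ENNReal.ofReal (D ^ (n - 1 : ℕ)) = ENNReal.ofReal D ^ (((n - 1 : ℕ) : ℕ) : ℝ) := by
    rw [ENNReal.ofReal_pow hD.le, ← ENNReal.rpow_natCast]
  have h2 : ENNReal.ofReal ((D ^ (n - 1 : ℕ) : ℝ)⁻¹)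
      = ENNReal.ofReal D ^ (-(((n - 1 : ℕ) : ℕ) : ℝ)) := by
    rw [ENNReal.ofReal_inv_of_pos (by positivity), h1, ← ENNReal.rpow_neg]
  have h3 : ENNReal.ofReal ((D ^ 2 : ℝ)⁻¹) = ENNReal.ofReal D ^ (-(2 : ℝ)) := by
    rw [ENNReal.ofReal_inv_of_pos (by positivity), ENNReal.ofReal_pow hD.le,
      ← ENNReal.rpow_natCast, ← ENNReal.rpow_neg]
    norm_num
  -- the constant identity
  have hkey : ENNReal.ofReal (D ^ (n - 1 : ℕ)) *
        (ENNReal.ofReal ((D ^ (n - 1 : ℕ) : ℝ)⁻¹) * ENNReal.ofReal ((D ^ 2 : ℝ)⁻¹)) ^ α *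
        ENNReal.ofReal ((D ^ (n - 1 : ℕ) : ℝ)⁻¹) ^ β
      = ENNReal.ofReal (D ^ (((n : ℝ) - 1) * (1 / q').toReal - ((n : ℝ) + 1) * α)) := by
    rw [h1, h2, h3, ← ENNReal.rpow_add _ _ e0 eT, ← ENNReal.rpow_mul, ← ENNReal.rpow_mul,
      ← ENNReal.rpow_add _ _ e0 eT, ← ENNReal.rpow_add _ _ e0 eT,
      ← ENNReal.ofReal_rpow_of_pos hD]
    congr 1
    have hq'β : (1 / q').toReal = 1 - β := by rw [hβ] at hsum ⊢; linarith
    rw [hq'β, hmcast]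
    ring
  -- the square-root factor
  have hκ : ∀ N₁ N₂ : ℝ≥0∞,
      ((ENNReal.ofReal ((D ^ (n - 1 : ℕ) : ℝ)⁻¹) ^ β * N₁) *
        (ENNReal.ofReal ((D ^ (n - 1 : ℕ) : ℝ)⁻¹) ^ β * N₂)) ^ (1 / (2 : ℝ))
      = ENNReal.ofReal ((D ^ (n - 1 : ℕ) : ℝ)⁻¹) ^ β * (N₁ * N₂) ^ (1 / (2 : ℝ)) := by
    intro N₁ N₂
    have hb0 : ENNReal.ofReal ((D ^ (n - 1 : ℕ) : ℝ)⁻¹) ^ β ≠ 0 :=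
      (ENNReal.rpow_pos (ENNReal.ofReal_pos.2 (by positivity)) ENNReal.ofReal_ne_top).ne'
    have hbT : ENNReal.ofReal ((D ^ (n - 1 : ℕ) : ℝ)⁻¹) ^ β ≠ ⊤ :=
      ENNReal.rpow_ne_top_of_nonneg ENNReal.toReal_nonneg ENNReal.ofReal_ne_top
    rw [mul_mul_mul_comm, ENNReal.mul_rpow_of_nonneg _ _ (by norm_num : (0:ℝ) ≤ 1 / 2)]
    congr 1
    rw [ENNReal.mul_rpow_of_nonneg _ _ (by norm_num : (0:ℝ) ≤ 1 / 2),
      ← ENNReal.rpow_add _ _ hb0 hbT]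
    norm_num
  rw [hLHS]
  calc ENNReal.ofReal (D ^ (n - 1)) *
        ((ENNReal.ofReal ((D ^ (n - 1) : ℝ)⁻¹) * ENNReal.ofReal ((D ^ 2 : ℝ)⁻¹)) ^ α *
          eLpNorm (fun x : EuclideanSpace ℝ (Fin (n - 1)) × ℝ =>
            Real.sqrt (‖parabExt (cube (D⁻¹ • (a₁ - c)) (δ / D)) (fun η => f (c + D • η)) x‖ *
              ‖parabExt (cube (D⁻¹ • (a₂ - c)) (δ / D)) (fun η => f (c + D • η)) x‖)) p volume)
      ≤ ENNReal.ofReal (D ^ (n - 1)) *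
        ((ENNReal.ofReal ((D ^ (n - 1) : ℝ)⁻¹) * ENNReal.ofReal ((D ^ 2 : ℝ)⁻¹)) ^ α *
          (ENNReal.ofReal C₀ *
            (eLpNorm (fun η => f (c + D • η)) q
                (volume.restrict (cube (D⁻¹ • (a₁ - c)) (δ / D))) *
              eLpNorm (fun η => f (c + D • η)) q
                (volume.restrict (cube (D⁻¹ • (a₂ - c)) (δ / D)))) ^ (1 / (2 : ℝ)))) :=
      mul_le_mul_right (mul_le_mul_right hmain _) _
    _ = ENNReal.ofReal
          (D ^ (((n : ℝ) - 1) * (1 / q').toReal - ((n : ℝ) + 1) * α) * C₀) *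
        (eLpNorm f q (volume.restrict (cube a₁ δ)) *
          eLpNorm f q (volume.restrict (cube a₂ δ))) ^ (1 / (2 : ℝ)) := by
      rw [hN₁, hN₂, hκ, ENNReal.ofReal_mul (Real.rpow_nonneg hD.le _), ← hkey]
      ring
end
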